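/- arXiv:2312.00946 — 3 statements merged into one kernel-verified Lean document; each statement's English description precedes it below -/
import Mathlib

section
/- Let X be a finite set, P a probability distribution on X, v : X → ℝ, and c ∈ [0,1]. Define the mean–upper-semideviation mapping σ(P, v) = Σ_j P_j v(j) + c Σ_j P_j max(0, v(j) − Σ_k P_k v(k)). Then σ is monotone with respect to v: if v ≤ w pointwise, then σ(P, v) ≤ σ(P, w). -/
/-! Because the weights sum to one, `max 0 (v j - m) = max (v j) m - m` turns the risk into
`(1 - c) * m + c * ∑ j, P j * max (v j) m` with `m` the mean of `v`. Both the mean and the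
`P`-average of `max v m` are monotone in `v`, and `c ≤ 1` makes both coefficients nonnegative. -/

open Finset

namespace MeanSemideviation

variable {X : Type*} [Fintype X] {P : X → ℝ}

noncomputable def mean (P u : X → ℝ) : ℝ := ∑ j, P j * u j

noncomputable def risk (P : X → ℝ) (c : ℝ) (u : X → ℝ) : ℝ :=
  mean P u + c * ∑ j, P j * max 0 (u j - mean P u)

theorem mean_mono (hP0 : ∀ j, 0 ≤ P j) : Monotone (mean P) := fun _ _ huv =>
  sum_le_sum fun j _ => mul_le_mul_of_nonneg_left (huv j) (hP0 j)

theorem sum_mul_max_zero_sub (hP1 : ∑ j, P j = 1) (u : X → ℝ) (t : ℝ) :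
    ∑ j, P j * max 0 (u j - t) = ∑ j, P j * max (u j) t - t := by
  have hpos : ∀ j, max 0 (u j - t) = max (u j) t - t := fun j => by
    rw [← sub_self t, max_sub_sub_right, max_comm]
  simp only [hpos, mul_sub, sum_sub_distrib, ← sum_mul, hP1, one_mul]

theorem risk_eq (hP1 : ∑ j, P j = 1) (c : ℝ) (u : X → ℝ) :
    risk P c u = (1 - c) * mean P u + c * ∑ j, P j * max (u j) (mean P u) := by
  rw [risk, sum_mul_max_zero_sub hP1]
  ring

theorem risk_mono (hP0 : ∀ j, 0 ≤ P j) (hP1 : ∑ j, P j = 1) {c : ℝ} (hc0 : 0 ≤ c)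
    (hc1 : c ≤ 1) : Monotone (risk P c) := by
  intro u v huv
  have hmean : mean P u ≤ mean P v := mean_mono hP0 huv
  have hmax : ∑ j, P j * max (u j) (mean P u) ≤ ∑ j, P j * max (v j) (mean P v) :=
    sum_le_sum fun j _ => mul_le_mul_of_nonneg_left (max_le_max (huv j) hmean) (hP0 j)
  rw [risk_eq hP1, risk_eq hP1]
  gcongr

end MeanSemideviation

theorem stmt_5 {X : Type*} [Fintype X] (P : X → ℝ)
    (hP0 : ∀ j, 0 ≤ P j) (hP1 : ∑ j, P j = 1)
    (c : ℝ) (hc0 : 0 ≤ c) (hc1 : c ≤ 1)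
    (v w : X → ℝ) (hvw : ∀ j, v j ≤ w j) :
    (∑ j, P j * v j) + c * ∑ j, P j * max 0 (v j - ∑ k, P k * v k)
      ≤ (∑ j, P j * w j) + c * ∑ j, P j * max 0 (w j - ∑ k, P k * w k) :=
  MeanSemideviation.risk_mono hP0 hP1 hc0 hc1 hvw
end

section
/- Let X be a finite set, P a probability distribution on X, v : X → ℝ, and N ≥ 1. Define σ^(N)(P, v) = E_{j^{1:N} iid ∼ P}[ max_m v(j^m) ]. Then E_P[v] ≤ σ^(N)(P, v) ≤ σ^(N+1)(P, v) ≤ max{v(j) : P_j > 0}, i.e., the mini-batch worst-case mappings are monotone nondecreasing in the batch size N, interpolating between the mean and the worst case. -/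
/-! The maximum over a batch dominates both `v` of its first draw and the maximum over its
remaining draws; summing out the extra coordinates against the product weights turns these into
`E_P[v] ≤ σ⁽ᴺ⁾` and `σ⁽ᴺ⁾ ≤ σ⁽ᴺ⁺¹⁾`. A batch of positive weight draws only from the support of `P`,
which gives the upper bound. -/

noncomputable def sigmaN {X : Type*} [Fintype X] (N : ℕ) (P : X → ℝ) (v : X → ℝ) : ℝ :=
  ∑ f : Fin (N + 1) → X, (∏ m, P (f m)) *
    (Finset.univ.sup' ⟨0, Finset.mem_univ 0⟩ fun m => v (f m))


open Finset

section BatchWeights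

variable {X : Type*} [Fintype X] {n : ℕ}

theorem Fintype.sum_fin_succ_pi {M : Type*} [AddCommMonoid M] (F : (Fin (n + 1) → X) → M) :
    ∑ f, F f = ∑ x, ∑ g : Fin n → X, F (Fin.cons x g) := by
  rw [← (Fin.consEquiv fun _ => X).sum_comp, Fintype.sum_prod_type]
  rfl

theorem sum_prod_weight_eq_one {P : X → ℝ} (hP1 : ∑ j, P j = 1) (n : ℕ) :
    ∑ f : Fin n → X, ∏ m, P (f m) = 1 := by
  rw [← Fintype.sum_pow, hP1, one_pow]

theorem sum_prod_weight_mul_cons (P : X → ℝ) (F : X → (Fin n → X) → ℝ) :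
    ∑ f : Fin (n + 1) → X, (∏ m, P (f m)) * F (f 0) (Fin.tail f) =
      ∑ x, P x * ∑ g : Fin n → X, (∏ m, P (g m)) * F x g := by
  rw [Fintype.sum_fin_succ_pi]
  refine sum_congr rfl fun x _ => ?_
  rw [mul_sum]
  refine sum_congr rfl fun g _ => ?_
  simp only [Fin.prod_univ_succ, Fin.cons_zero, Fin.cons_succ, Fin.tail_cons]
  ring

theorem sum_prod_weight_mul_apply_zero {P : X → ℝ} (hP1 : ∑ j, P j = 1) (u : X → ℝ) :
    ∑ f : Fin (n + 1) → X, (∏ m, P (f m)) * u (f 0) = ∑ j, P j * u j := by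
  have := sum_prod_weight_mul_cons P fun x (_ : Fin n → X) => u x
  simp only [← sum_mul, sum_prod_weight_eq_one hP1, one_mul] at this
  exact this

theorem sum_prod_weight_mul_tail {P : X → ℝ} (hP1 : ∑ j, P j = 1) (G : (Fin n → X) → ℝ) :
    ∑ f : Fin (n + 1) → X, (∏ m, P (f m)) * G (Fin.tail f) =
      ∑ g : Fin n → X, (∏ m, P (g m)) * G g := by
  rw [sum_prod_weight_mul_cons P fun _ g => G g, ← sum_mul, hP1, one_mul]

end BatchWeights

section MiniBatch

variable {X : Type*} [Fintype X] {P : X → ℝ}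

theorem sum_mul_le_sigmaN (hP0 : ∀ j, 0 ≤ P j) (hP1 : ∑ j, P j = 1) (N : ℕ) (v : X → ℝ) :
    ∑ j, P j * v j ≤ sigmaN N P v := by
  rw [← sum_prod_weight_mul_apply_zero hP1]
  refine sum_le_sum fun f _ => ?_
  exact mul_le_mul_of_nonneg_left (le_sup' (fun m => v (f m)) (mem_univ 0))
    (prod_nonneg fun m _ => hP0 _)

theorem sigmaN_le_sigmaN_succ (hP0 : ∀ j, 0 ≤ P j) (hP1 : ∑ j, P j = 1) (N : ℕ) (v : X → ℝ) :
    sigmaN N P v ≤ sigmaN (N + 1) P v := by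
  rw [sigmaN, ← sum_prod_weight_mul_tail hP1]
  refine sum_le_sum fun f _ => mul_le_mul_of_nonneg_left ?_ (prod_nonneg fun m _ => hP0 _)
  exact sup'_le _ _ fun m _ => le_sup' (fun m => v (f m)) (mem_univ m.succ)

theorem sigmaN_le_sup'_support (hP0 : ∀ j, 0 ≤ P j) (hP1 : ∑ j, P j = 1) (N : ℕ) (v : X → ℝ)
    (hne : (univ.filter fun j => 0 < P j).Nonempty) :
    sigmaN N P v ≤ (univ.filter fun j => 0 < P j).sup' hne v := by
  set M := (univ.filter fun j => 0 < P j).sup' hne v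
  calc sigmaN N P v ≤ ∑ f : Fin (N + 1) → X, (∏ m, P (f m)) * M := by
        refine sum_le_sum fun f _ => ?_
        rcases eq_or_ne (∏ m, P (f m)) 0 with hzero | hne_zero
        · simp only [hzero, zero_mul, le_refl]
        refine mul_le_mul_of_nonneg_left ?_ (prod_nonneg fun m _ => hP0 _)
        -- a batch of positive weight only draws points of the support
        refine sup'_le _ _ fun m _ => le_sup' v ?_
        simpa using (hP0 (f m)).lt_of_ne' (prod_ne_zero_iff.mp hne_zero m (mem_univ m))
    _ = M := by rw [← sum_mul, sum_prod_weight_eq_one hP1, one_mul]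

end MiniBatch

theorem stmt_9 {X : Type*} [Fintype X] (N : ℕ) (P : X → ℝ)
    (hP0 : ∀ j, 0 ≤ P j) (hP1 : ∑ j, P j = 1)
    (v : X → ℝ)
    (hne : (Finset.univ.filter fun j => 0 < P j).Nonempty) :
    (∑ j, P j * v j) ≤ sigmaN N P v ∧
    sigmaN N P v ≤ sigmaN (N + 1) P v ∧
    sigmaN (N + 1) P v ≤ (Finset.univ.filter fun j => 0 < P j).sup' hne v :=
  ⟨sum_mul_le_sigmaN hP0 hP1 N v, sigmaN_le_sigmaN_succ hP0 hP1 N v,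
    sigmaN_le_sup'_support hP0 hP1 (N + 1) v hne⟩
end

section
/- Let X be a finite set and σ : 𝒫(X) × ℝ^X → ℝ a law-invariant mapping, i.e., σ(P,v) = σ(Q,w) whenever P{v ≤ η} = Q{w ≤ η} for all η ∈ ℝ. Then the mini-batch mapping σ^(N)(P, v) = E_{j^{1:N} iid ∼ P}[ σ( (1/N) Σ_m δ_{j^m}, v ) ] is also law invariant: if (P, v) and (Q, w) induce the same distribution function, then σ^(N)(P, v) = σ^(N)(Q, w). -/
/-!
Both sides depend on `(P, v)` only through the law of `v` under `P`. The value of `σ` at the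
empirical measure of a sample `f` depends only on the sample values `v ∘ f`, because the law of
`v` under `emp N f` is the uniform law of those values; so `σ (emp N f) v = Φ (v ∘ f)` for one
function `Φ`. Grouping the samples by their values, the expectation of `Φ (v ∘ f)` becomes a sum
over value vectors `u` weighted by `∏ m, P{v = u m}`, and these point masses are determined by the
distribution function: `P{v = t}` is `P{v ≤ t}` minus `P{v ≤ η}` for the largest value `η < t`
taken by `v` or `w`.
-/

noncomputable def emp {X : Type*} [Fintype X] [DecidableEq X] (N : ℕ)
    (f : Fin N → X) : X → ℝ :=
  fun j => (∑ m, if f m = j then (1 : ℝ) else 0) / N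

namespace MiniBatch

open Finset

variable {X Y α R ι : Type*} [Fintype X] [Fintype Y]

def cdf [LinearOrder α] [AddCommMonoid R] (P : X → R) (v : X → α) (η : α) : R :=
  ∑ j, if v j ≤ η then P j else 0

def pushforward [DecidableEq α] [AddCommMonoid R] (P : X → R) (v : X → α) (t : α) : R :=
  ∑ j, if v j = t then P j else 0

theorem exists_forall_lt_iff_le [LinearOrder α] [NoMinOrder α] (S : Finset α) (t : α) :
    ∃ η, ∀ s ∈ S, s < t ↔ s ≤ η := by
  obtain ⟨t', ht'⟩ := exists_lt t
  set T := insert t' (S.filter (· < t))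
  have hT : T.max' (insert_nonempty _ _) < t := (max'_lt_iff _ _).mpr fun s hs => by
    rcases mem_insert.mp hs with rfl | hs
    exacts [ht', (mem_filter.mp hs).2]
  refine ⟨T.max' (insert_nonempty _ _), fun s hs => ⟨fun hst => ?_, fun hsη => hsη.trans_lt hT⟩⟩
  exact T.le_max' s (mem_insert_of_mem (mem_filter.mpr ⟨hs, hst⟩))

theorem cdf_eq_pushforward_add [LinearOrder α] [AddCommMonoid R] (P : X → R) (v : X → α)
    (t : α) : cdf P v t = pushforward P v t + ∑ j, if v j < t then P j else 0 := by
  rw [cdf, pushforward, ← sum_add_distrib]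
  refine sum_congr rfl fun j _ => ?_
  rcases lt_trichotomy (v j) t with hlt | heq | hgt
  · simp [hlt.le, hlt.ne, hlt]
  · simp [heq]
  · simp [hgt.not_ge, hgt.ne', hgt.not_gt]

theorem pushforward_eq_of_cdf_eq [LinearOrder α] [NoMinOrder α] [AddCommGroup R]
    {P : X → R} {Q : Y → R} {v : X → α} {w : Y → α} (h : cdf P v = cdf Q w) :
    pushforward P v = pushforward Q w := by
  funext t
  obtain ⟨η, hη⟩ := exists_forall_lt_iff_le (univ.image v ∪ univ.image w) t
  have hstrict : (∑ j, if v j < t then P j else 0) = ∑ j, if w j < t then Q j else 0 :=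
    calc (∑ j, if v j < t then P j else 0) = ∑ j, if v j ≤ η then P j else 0 :=
          sum_congr rfl fun j _ => by simp only [hη (v j) (by simp)]
      _ = ∑ j, if w j ≤ η then Q j else 0 := congrFun h η
      _ = ∑ j, if w j < t then Q j else 0 :=
          sum_congr rfl fun j _ => by simp only [hη (w j) (by simp)]
  have ht := congrFun h t
  rw [cdf_eq_pushforward_add, cdf_eq_pushforward_add, hstrict] at ht
  exact add_right_cancel ht

theorem cdf_pushforward [DecidableEq X] [LinearOrder α] [AddCommMonoid R] (P : Y → R)
    (f : Y → X) (x : X → α) : cdf (pushforward P f) x = cdf P (x ∘ f) := by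
  funext η
  have hswap : ∀ j, (if x j ≤ η then ∑ i, if f i = j then P i else 0 else (0 : R))
      = ∑ i, if f i = j then (if x (f i) ≤ η then P i else 0) else 0 := by
    intro j
    split_ifs with hj
    · exact sum_congr rfl fun i _ => by split_ifs <;> simp_all
    · refine (sum_eq_zero fun i _ => ?_).symm
      split_ifs with hi hle
      · exact absurd (hi ▸ hle) hj
      all_goals rfl
  simp only [cdf, pushforward, Function.comp_apply]
  rw [sum_congr rfl fun j _ => hswap j, sum_comm]
  simp

section Samples

variable [Fintype ι] [DecidableEq ι] [DecidableEq α] [CommSemiring R]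

theorem sum_filter_comp_eq_prod_pushforward (P : X → R) (v : X → α) (u : ι → α) :
    ∑ f : ι → X with v ∘ f = u, ∏ i, P (f i) = ∏ i, pushforward P v (u i) := by
  simp only [pushforward, ← sum_filter]
  rw [prod_univ_sum]
  refine sum_congr ?_ fun _ _ => rfl
  ext f
  simp [Fintype.mem_piFinset, funext_iff]

theorem sum_prod_mul_comp_eq_sum_pushforward (P : X → R) (v : X → α) (Φ : (ι → α) → R)
    (S : Finset (ι → α)) (hS : ∀ f : ι → X, v ∘ f ∈ S) :
    ∑ f : ι → X, (∏ i, P (f i)) * Φ (v ∘ f) = ∑ u ∈ S, (∏ i, pushforward P v (u i)) * Φ u := by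
  rw [← sum_fiberwise_of_maps_to fun f _ => hS f]
  refine sum_congr rfl fun u _ => ?_
  rw [← sum_filter_comp_eq_prod_pushforward, sum_mul]
  exact sum_congr rfl fun f hf => by rw [(mem_filter.mp hf).2]

theorem sum_prod_mul_comp_eq_of_pushforward_eq {P : X → R} {Q : Y → R} {v : X → α}
    {w : Y → α} (h : pushforward P v = pushforward Q w) (Φ : (ι → α) → R) :
    ∑ f : ι → X, (∏ i, P (f i)) * Φ (v ∘ f) = ∑ g : ι → Y, (∏ i, Q (g i)) * Φ (w ∘ g) := by
  set S := univ.image (fun f : ι → X => v ∘ f) ∪ univ.image (fun g : ι → Y => w ∘ g)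
  rw [sum_prod_mul_comp_eq_sum_pushforward P v Φ S (by simp [S]),
    sum_prod_mul_comp_eq_sum_pushforward Q w Φ S (by simp [S]), h]

end Samples

section Empirical

variable [DecidableEq X]

theorem emp_eq_pushforward (N : ℕ) (f : Fin N → X) :
    emp N f = pushforward (fun _ => (N : ℝ)⁻¹) f := by
  funext j
  simp only [emp, pushforward, sum_div, ite_div, zero_div, one_div]

theorem exists_sigma_emp_eq_comp (N : ℕ) (σ : (X → ℝ) → (X → ℝ) → ℝ)
    (hσ : ∀ P Q v w, cdf P v = cdf Q w → σ P v = σ Q w) :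
    ∃ Φ : (Fin N → ℝ) → ℝ, ∀ f x, σ (emp N f) x = Φ (x ∘ f) := by
  have hfac : Function.FactorsThrough (fun p : (Fin N → X) × (X → ℝ) => σ (emp N p.1) p.2)
      (fun p => p.2 ∘ p.1) := by
    rintro ⟨f, x⟩ ⟨g, y⟩ hxy
    apply hσ
    rw [emp_eq_pushforward, emp_eq_pushforward, cdf_pushforward, cdf_pushforward]
    exact congrArg _ hxy
  exact ⟨Function.extend _ _ 0, fun f x => (hfac.extend_apply 0 (f, x)).symm⟩

end Empirical

end MiniBatch

theorem stmt_12_general {X : Type*} [Fintype X] [DecidableEq X] (N : ℕ)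
    (σ : (X → ℝ) → (X → ℝ) → ℝ)
    (hσ : ∀ (P Q : X → ℝ) (v w : X → ℝ),
      (∀ η : ℝ, (∑ j, if v j ≤ η then P j else 0) = (∑ j, if w j ≤ η then Q j else 0)) →
      σ P v = σ Q w)
    (P Q : X → ℝ)
    (v w : X → ℝ)
    (h : ∀ η : ℝ, (∑ j, if v j ≤ η then P j else 0) = (∑ j, if w j ≤ η then Q j else 0)) :
    (∑ f : Fin N → X, (∏ m, P (f m)) * σ (emp N f) v)
      = ∑ g : Fin N → X, (∏ m, Q (g m)) * σ (emp N g) w := by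
  obtain ⟨Φ, hΦ⟩ := MiniBatch.exists_sigma_emp_eq_comp N σ fun P Q v w hPQ => hσ P Q v w (congrFun hPQ)
  simp only [hΦ]
  exact MiniBatch.sum_prod_mul_comp_eq_of_pushforward_eq
    (MiniBatch.pushforward_eq_of_cdf_eq (funext h)) Φ

theorem stmt_12 {X : Type*} [Fintype X] [DecidableEq X] (N : ℕ)
    (σ : (X → ℝ) → (X → ℝ) → ℝ)
    (hσ : ∀ (P Q : X → ℝ) (v w : X → ℝ),
      (∀ η : ℝ, (∑ j, if v j ≤ η then P j else 0) = (∑ j, if w j ≤ η then Q j else 0)) →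
      σ P v = σ Q w)
    (P Q : X → ℝ) (hP0 : ∀ j, 0 ≤ P j) (hP1 : ∑ j, P j = 1)
    (hQ0 : ∀ j, 0 ≤ Q j) (hQ1 : ∑ j, Q j = 1)
    (v w : X → ℝ)
    (h : ∀ η : ℝ, (∑ j, if v j ≤ η then P j else 0) = (∑ j, if w j ≤ η then Q j else 0)) :
    (∑ f : Fin N → X, (∏ m, P (f m)) * σ (emp N f) v)
      = ∑ g : Fin N → X, (∏ m, Q (g m)) * σ (emp N g) w :=
  stmt_12_general N σ hσ P Q v w h
end
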